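/- arXiv:1012.2040 — 4 statements merged into one kernel-verified Lean document; each statement's English description precedes it below -/
import Mathlib

section
/- Let κ be a regular uncountable cardinal and λ ≥ κ a cardinal. If a P_κλ-list is thin, then it is slender. -/
open Cardinal Set

/-! Combinatorial framework: `P_κ λ`, clubs, stationarity, thin/slender lists,
branches, the principles `TP`, `SP`, `ITP`, `ISP`, the ideals `I_IT`, `I_IS`,
ultrafilter notions, ordinal clubs, and square sequences. -/

/-- `P_κ λ`: the collection of subsets of (the set of ordinals below) `λ` of size `< κ`. -/
def Pk (κ lam : Cardinal.{0}) : Set (Set Ordinal.{0}) :=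
  {a | (∀ α ∈ a, α < lam.ord) ∧ #a < Cardinal.lift.{1} κ}

/-- `C` is club in `P_κ X` (represented by `S`, a collection of subsets of `X`):
cofinal in `(S, ⊆)` and closed under unions of `⊆`-increasing chains of length `< κ`. -/
def IsClubIn {X : Type*} (κ : Cardinal.{0}) (S : Set (Set X)) (C : Set (Set X)) : Prop :=
  C ⊆ S ∧ (∀ a ∈ S, ∃ c ∈ C, a ⊆ c) ∧
    ∀ δ : Ordinal.{0}, 0 < δ → δ.card < κ →
      ∀ f : Ordinal.{0} → Set X, (∀ β < δ, f β ∈ C) →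
        (∀ β γ, β ≤ γ → γ < δ → f β ⊆ f γ) →
        (⋃ β ∈ Set.Iio δ, f β) ∈ C

/-- `T` is stationary in `P_κ X`: it meets every club. -/
def IsStatIn {X : Type*} (κ : Cardinal.{0}) (S T : Set (Set X)) : Prop :=
  T ⊆ S ∧ ∀ C, IsClubIn κ S C → (T ∩ C).Nonempty

/-- A `P_κ λ`-list: `d a ⊆ a` for every `a ∈ P_κ λ`. -/
def IsList (κ lam : Cardinal) (d : Set Ordinal → Set Ordinal) : Prop :=
  ∀ a ∈ Pk κ lam, d a ⊆ a

/-- A thin `P_κ λ`-list: on a club of `c`'s, `|{d_a ∩ c : c ⊆ a ∈ P_κ λ}| < κ`. -/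
def IsThin (κ lam : Cardinal) (d : Set Ordinal → Set Ordinal) : Prop :=
  ∃ C, IsClubIn κ (Pk κ lam) C ∧
    ∀ c ∈ C, #{x : Set Ordinal | ∃ a ∈ Pk κ lam, c ⊆ a ∧ x = d a ∩ c} < Cardinal.lift.{1} κ

/-- `H_θ`: sets hereditarily of cardinality `< θ`. -/
def HSet (θ : Cardinal.{0}) : Set ZFSet.{0} :=
  {x | ZFSet.Hereditarily (fun y => #y.toSet < Cardinal.lift.{1} θ) x}

/-- `x` is the von Neumann ordinal corresponding to the ordinal `α`. -/
def IsOrdZF (x : ZFSet) (α : Ordinal) : Prop :=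
  x.IsOrdinal ∧ x.rank = α

/-- The ZFC set `x` codes the set of ordinals `b`. -/
def CodesSet (x : ZFSet) (b : Set Ordinal) : Prop :=
  ∀ y, y ∈ x ↔ ∃ α ∈ b, IsOrdZF y α

/-- `M ∩ λ`: the set of ordinals below `λ` whose von Neumann code lies in `M`. -/
def ordsOf (lam : Cardinal) (M : Set ZFSet) : Set Ordinal :=
  {α | α < lam.ord ∧ ∃ x ∈ M, IsOrdZF x α}

/-- A slender `P_κ λ`-list: for every sufficiently large regular `θ` there is a club
`C ⊆ P_κ H_θ` such that `d_{M ∩ λ} ∩ b ∈ M` for all `M ∈ C` and all countable `b ∈ M`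
with `b ⊆ λ`. -/
def IsSlender (κ lam : Cardinal) (d : Set Ordinal → Set Ordinal) : Prop :=
  ∃ θ₀ : Cardinal, ∀ θ, θ₀ ≤ θ → θ.IsRegular →
    ∃ C, IsClubIn κ {M : Set ZFSet.{0} | M ⊆ HSet θ ∧ #M < Cardinal.lift.{1} κ} C ∧
      ∀ M ∈ C, ∀ b : Set Ordinal, b.Countable → (∀ α ∈ b, α < lam.ord) →
        (∃ x ∈ M, CodesSet x b) →
        ∃ x ∈ M, CodesSet x (d (ordsOf lam M) ∩ b)

/-- `e` is a cofinal branch of the list `d`. -/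
def IsCofBranch (κ lam : Cardinal) (d : Set Ordinal → Set Ordinal) (e : Set Ordinal) : Prop :=
  (∀ α ∈ e, α < lam.ord) ∧
    ∀ a ∈ Pk κ lam, ∃ z ∈ Pk κ lam, a ⊆ z ∧ e ∩ a = d z ∩ a

/-- `e` is an ineffable branch of the list `d`. -/
def IsIneffBranch (κ lam : Cardinal) (d : Set Ordinal → Set Ordinal) (e : Set Ordinal) : Prop :=
  (∀ α ∈ e, α < lam.ord) ∧
    IsStatIn κ (Pk κ lam) {a ∈ Pk κ lam | e ∩ a = d a}

/-- `TP(κ,λ)`: every thin `P_κ λ`-list has a cofinal branch. -/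
def TP (κ lam : Cardinal) : Prop :=
  ∀ d, IsList κ lam d → IsThin κ lam d → ∃ e, IsCofBranch κ lam d e

/-- `SP(κ,λ)`: every slender `P_κ λ`-list has a cofinal branch. -/
def SP (κ lam : Cardinal) : Prop :=
  ∀ d, IsList κ lam d → IsSlender κ lam d → ∃ e, IsCofBranch κ lam d e

/-- `ITP(κ,λ)`: every thin `P_κ λ`-list has an ineffable branch. -/
def ITP (κ lam : Cardinal) : Prop :=
  ∀ d, IsList κ lam d → IsThin κ lam d → ∃ e, IsIneffBranch κ lam d e

/-- `ISP(κ,λ)`: every slender `P_κ λ`-list has an ineffable branch. -/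
def ISP (κ lam : Cardinal) : Prop :=
  ∀ d, IsList κ lam d → IsSlender κ lam d → ∃ e, IsIneffBranch κ lam d e

/-- The list `d` is `A`-effable. -/
def IsEffable (κ lam : Cardinal) (d : Set Ordinal → Set Ordinal) (A : Set (Set Ordinal)) : Prop :=
  ∀ S, S ⊆ A → IsStatIn κ (Pk κ lam) S →
    ∃ a ∈ S, ∃ b ∈ S, a ⊆ b ∧ d a ≠ d b ∩ a

/-- The ideal `I_IT[κ,λ]`. -/
def IIT (κ lam : Cardinal) : Set (Set (Set Ordinal)) :=
  {A | A ⊆ Pk κ lam ∧ ∃ d, IsList κ lam d ∧ IsThin κ lam d ∧ IsEffable κ lam d A}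

/-- The ideal `I_IS[κ,λ]`. -/
def IIS (κ lam : Cardinal) : Set (Set (Set Ordinal)) :=
  {A | A ⊆ Pk κ lam ∧ ∃ d, IsList κ lam d ∧ IsSlender κ lam d ∧ IsEffable κ lam d A}

/-- The filter `F_IT[κ,λ]` dual to `I_IT[κ,λ]`. -/
def FIT (κ lam : Cardinal) : Set (Set (Set Ordinal)) :=
  {A | A ⊆ Pk κ lam ∧ (Pk κ lam \ A) ∈ IIT κ lam}

/-- `U` is an ultrafilter on the set `X`. -/
def IsUFOn {α : Type*} (X : Set α) (U : Set (Set α)) : Prop :=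
  (∀ A ∈ U, A ⊆ X) ∧ X ∈ U ∧ ∅ ∉ U ∧
    (∀ A ∈ U, ∀ B, A ⊆ B → B ⊆ X → B ∈ U) ∧
    (∀ A ∈ U, ∀ B ∈ U, A ∩ B ∈ U) ∧
    (∀ A, A ⊆ X → (A ∈ U ∨ X \ A ∈ U))

/-- `U` is `κ`-complete: closed under intersections of fewer than `κ` of its members. -/
def KComplete (κ : Cardinal.{0}) (X : Set (Set Ordinal)) (U : Set (Set (Set Ordinal))) : Prop :=
  ∀ s : Set (Set (Set Ordinal)), s ⊆ U → #s < Cardinal.lift.{1} κ → X ∩ ⋂₀ s ∈ U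

/-- `U` is fine on `P_κ λ`. -/
def Fine (κ lam : Cardinal) (U : Set (Set (Set Ordinal))) : Prop :=
  ∀ x < lam.ord, {a ∈ Pk κ lam | x ∈ a} ∈ U

/-- `U` is normal on `P_κ λ`: closed under diagonal intersections. -/
def NormalUF (κ lam : Cardinal) (U : Set (Set (Set Ordinal))) : Prop :=
  ∀ A : Ordinal → Set (Set Ordinal), (∀ x < lam.ord, A x ∈ U) →
    {a ∈ Pk κ lam | ∀ x ∈ a, a ∈ A x} ∈ U

/-- `κ` is strongly compact: for every `λ ≥ κ` there is a `κ`-complete fine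
ultrafilter on `P_κ λ`. -/
def IsStronglyCompact (κ : Cardinal) : Prop :=
  ∀ lam : Cardinal, κ ≤ lam →
    ∃ U, IsUFOn (Pk κ lam) U ∧ KComplete κ (Pk κ lam) U ∧ Fine κ lam U

/-- `κ` is supercompact: for every `λ ≥ κ` there is a `κ`-complete normal fine
ultrafilter on `P_κ λ`. -/
def IsSupercompact (κ : Cardinal) : Prop :=
  ∀ lam : Cardinal, κ ≤ lam →
    ∃ U, IsUFOn (Pk κ lam) U ∧ KComplete κ (Pk κ lam) U ∧ Fine κ lam U ∧ NormalUF κ lam U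

/-- `C` is club in the ordinal `o`: unbounded in `o` and closed. -/
def OrdClub (o : Ordinal) (C : Set Ordinal) : Prop :=
  C ⊆ Set.Iio o ∧ (∀ β < o, ∃ γ ∈ C, β ≤ γ) ∧
    ∀ α < o, 0 < α → sSup (C ∩ Set.Iio α) = α → α ∈ C

/-- `S` is stationary in the ordinal `o`. -/
def OrdStat (o : Ordinal) (S : Set Ordinal) : Prop :=
  S ⊆ Set.Iio o ∧ ∀ C, OrdClub o C → (S ∩ C).Nonempty

/-- `δ` is a limit point of `C`: `δ > 0` and `δ = sup (C ∩ δ)`. -/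
def IsLimPt (C : Set Ordinal) (δ : Ordinal) : Prop :=
  0 < δ ∧ sSup (C ∩ Set.Iio δ) = δ

/-- `κ` is an ineffable cardinal. -/
def IsIneffableCard (κ : Cardinal) : Prop :=
  ∀ d : Ordinal → Set Ordinal, (∀ α < κ.ord, d α ⊆ Set.Iio α) →
    ∃ e ⊆ Set.Iio κ.ord, OrdStat κ.ord {α | α < κ.ord ∧ e ∩ Set.Iio α = d α}

/-- A `□_E(κ,λ)`-sequence. -/
def IsSquareSeq (κ : Cardinal.{0}) (lam : Ordinal.{0}) (E : Set Ordinal.{0})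
    (𝒞 : Ordinal.{0} → Set (Set Ordinal.{0})) : Prop :=
  (∀ α, Order.IsSuccLimit α → α ∈ E → α < lam →
    ((𝒞 α).Nonempty ∧ #(𝒞 α) < Cardinal.lift.{1} κ) ∧
      ∀ C ∈ 𝒞 α, OrdClub α C ∧ ∀ β, IsLimPt C β → β ∈ E → C ∩ Set.Iio β ∈ 𝒞 β) ∧
  ¬∃ D, OrdClub lam D ∧ ∀ δ, IsLimPt D δ → δ ∈ E → δ < lam → D ∩ Set.Iio δ ∈ 𝒞 δ

/-- `□_E(κ,λ)` holds. -/
def SquareE (κ : Cardinal.{0}) (lam : Ordinal.{0}) (E : Set Ordinal.{0}) : Prop :=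
  ∃ 𝒞, IsSquareSeq κ lam E 𝒞

/-- `(a, ∈) ≺ (λ, ∈)`: `a` is an elementary substructure of the ordinals below `lam`
(with `∈`, equivalently the order, as the only relation). -/
def ElemSubOrd (lam : Ordinal) (a : Set Ordinal) : Prop :=
  letI := FirstOrder.Language.orderStructure ↥a
  letI := FirstOrder.Language.orderStructure ↥(Set.Iio lam)
  ∃ h : a ⊆ Set.Iio lam,
    ∀ (n : ℕ) (φ : FirstOrder.Language.order.Formula (Fin n)) (v : Fin n → ↥a),
      φ.Realize v ↔ φ.Realize fun i => Set.inclusion h (v i)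

/-- `P'_κ λ`: the members `a` of `P_κ λ` with `a ∩ κ` an ordinal and `(a,∈) ≺ (λ,∈)`. -/
def P'k (κ lam : Cardinal) : Set (Set Ordinal) :=
  {a ∈ Pk κ lam | (∃ β : Ordinal, a ∩ Set.Iio κ.ord = Set.Iio β) ∧ ElemSubOrd lam.ord a}

/-- `κ_a`: the ordinal `a ∩ κ` (for `a ∈ P'_κ λ`). -/
noncomputable def kapOf (κ : Cardinal) (a : Set Ordinal) : Ordinal :=
  sInf {β : Ordinal | a ∩ Set.Iio κ.ord ⊆ Set.Iio β}

/-! Let `C₀` witness thinness and cover each `b ∈ P_κ λ` by some `c_b ∈ C₀`. For `θ > λ`, the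
`M ∈ P_κ H_θ` that contain, along with the code of any countable `b`, the ordinals of `c_b`
and codes of `v ∩ b` for all traces `v = d_a ∩ c_b` (`c_b ⊆ a`) form a club, as thinness
leaves fewer than `κ` such traces. For such `M`, `a = M ∩ λ` contains `c_b`, so
`d_a ∩ b = (d_a ∩ c_b) ∩ b` is coded in `M`. -/

theorem isOrdZF_iff {x : ZFSet} {α : Ordinal} : IsOrdZF x α ↔ α.toZFSet = x := by
  constructor
  · rintro ⟨hx, rfl⟩
    exact hx.toZFSet_rank_eq
  · rintro rfl
    exact ⟨ZFSet.isOrdinal_toZFSet α, Ordinal.rank_toZFSet α⟩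

theorem CodesSet.toZFSet_mem_iff {x : ZFSet} {b : Set Ordinal} (h : CodesSet x b)
    {α : Ordinal} : α.toZFSet ∈ x ↔ α ∈ b := by
  simp only [h α.toZFSet, isOrdZF_iff, Ordinal.toZFSet_injective.eq_iff, exists_eq_right]

theorem CodesSet.eq_setOf {x : ZFSet} {b : Set Ordinal} (h : CodesSet x b) :
    b = {α | α.toZFSet ∈ x} := by
  ext α
  exact h.toZFSet_mem_iff.symm

theorem mem_ordsOf {lam : Cardinal} {M : Set ZFSet} {α : Ordinal} :
    α ∈ ordsOf lam M ↔ α < lam.ord ∧ α.toZFSet ∈ M := by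
  simp only [ordsOf, isOrdZF_iff, mem_ofPred_eq, exists_eq_right']

theorem mk_ordsOf_le (lam : Cardinal.{0}) (M : Set ZFSet.{0}) : #(ordsOf lam M) ≤ #M :=
  (mk_le_mk_of_subset fun _ hα => (mem_ordsOf.1 hα).2).trans
    (mk_preimage_of_injective _ M Ordinal.toZFSet_injective)

theorem toZFSet_mem_HSet {θ : Cardinal.{0}} {α : Ordinal.{0}} (h : α.card < θ) :
    α.toZFSet ∈ HSet θ := by
  induction α using WellFoundedLT.induction with
  | _ α ih =>
    rw [HSet, mem_ofPred_eq, ZFSet.hereditarily_iff]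
    refine ⟨?_, fun y hy => ?_⟩
    · refine ZFSet.cardinalMk_coe_sort.trans_lt ?_
      rw [Ordinal.card_toZFSet]
      exact lift_lt.2 h
    · obtain ⟨β, hβ, rfl⟩ := Ordinal.mem_toZFSet_iff.1 hy
      exact ih β hβ ((Ordinal.card_le_card hβ.le).trans_lt h)

noncomputable def codeBelow (o : Ordinal) (s : Set Ordinal) : ZFSet :=
  ZFSet.sep (fun y => y.rank ∈ s) o.toZFSet

theorem codesSet_codeBelow (o : Ordinal) (s : Set Ordinal) :
    CodesSet (codeBelow o s) (s ∩ Iio o) := by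
  intro y
  simp only [codeBelow, ZFSet.mem_sep, Ordinal.mem_toZFSet_iff, isOrdZF_iff]
  constructor
  · rintro ⟨⟨α, hα, rfl⟩, hs⟩
    rw [Ordinal.rank_toZFSet] at hs
    exact ⟨α, ⟨hs, hα⟩, rfl⟩
  · rintro ⟨α, ⟨hs, hα⟩, rfl⟩
    exact ⟨⟨α, hα, rfl⟩, by rwa [Ordinal.rank_toZFSet]⟩

theorem codeBelow_mem_HSet {θ : Cardinal.{0}} {o : Ordinal.{0}} (h : o.card < θ)
    (s : Set Ordinal.{0}) : codeBelow o s ∈ HSet θ := by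
  have ho := toZFSet_mem_HSet h
  have hsub : codeBelow o s ⊆ o.toZFSet := fun y hy => (ZFSet.mem_sep.1 hy).1
  rw [HSet, mem_ofPred_eq, ZFSet.hereditarily_iff] at ho ⊢
  exact ⟨(mk_le_mk_of_subset hsub).trans_lt ho.1, fun y hy => ho.2 y (hsub hy)⟩

theorem countable_mem_Pk {κ lam : Cardinal.{0}} (hunc : ℵ₀ < κ) {b : Set Ordinal.{0}}
    (hb : b.Countable) (hb_lt : ∀ α ∈ b, α < lam.ord) : b ∈ Pk κ lam :=
  ⟨hb_lt, (mk_le_aleph0_iff.2 hb.to_subtype).trans_lt (aleph0_lt_lift.2 hunc)⟩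

theorem IsClubIn.exists_cover {X : Type*} {κ : Cardinal.{0}} {S C : Set (Set X)}
    (hC : IsClubIn κ S C) (hS : S.Nonempty) :
    ∃ cover : Set X → Set X, ∀ b, cover b ∈ C ∧ (b ∈ S → b ⊆ cover b) := by
  classical
  obtain ⟨c₀, hc₀, -⟩ := hC.2.1 _ hS.some_mem
  have h : ∀ b, ∃ c ∈ C, b ∈ S → b ⊆ c := fun b =>
    if hb : b ∈ S then
      let ⟨c, hc, hbc⟩ := hC.2.1 b hb
      ⟨c, hc, fun _ => hbc⟩
    else ⟨c₀, hc₀, fun h => absurd h hb⟩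
  choose cover hcover using h
  exact ⟨cover, hcover⟩

section ClosedUnder

variable {X : Type 1} {κ : Cardinal.{0}} {Y : Set X} {F : X → Set X}

theorem exists_closedUnder_superset (hκ : κ.IsRegular) (hunc : ℵ₀ < κ)
    (hFY : ∀ x ∈ Y, F x ⊆ Y) (hF : ∀ x ∈ Y, #(F x) < lift.{1} κ) {M₀ : Set X}
    (hM₀ : M₀ ⊆ Y ∧ #M₀ < lift.{1} κ) :
    ∃ M, (M ⊆ Y ∧ #M < lift.{1} κ) ∧ (∀ x ∈ M, F x ⊆ M) ∧ M₀ ⊆ M := by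
  have hκ' := hκ.lift.{1}
  let g (n : ℕ) : Set X := (fun M => M ∪ ⋃ x ∈ M, F x)^[n] M₀
  have hg_succ (n : ℕ) : g (n + 1) = g n ∪ ⋃ x ∈ g n, F x := Function.iterate_succ_apply' ..
  have hg (n : ℕ) : g n ⊆ Y ∧ #(g n) < lift.{1} κ := by
    induction n with
    | zero => exact hM₀
    | succ n ih =>
      rw [hg_succ]
      refine ⟨union_subset ih.1 (iUnion₂_subset fun x hx => hFY x (ih.1 hx)), ?_⟩
      refine (mk_union_le _ _).trans_lt (add_lt_of_lt hκ'.aleph0_le ih.2 ?_)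
      exact (card_biUnion_lt_iff_forall_of_isRegular hκ' ih.2).2 fun x hx => hF x (ih.1 hx)
  refine ⟨⋃ n, g n, ⟨iUnion_subset fun n => (hg n).1, ?_⟩, fun x hx => ?_, subset_iUnion g 0⟩
  · have hrange : #(range g) < lift.{1} κ :=
      (mk_le_aleph0_iff.2 (countable_range g).to_subtype).trans_lt (aleph0_lt_lift.2 hunc)
    rw [← sUnion_range, sUnion_eq_biUnion]
    exact (card_biUnion_lt_iff_forall_of_isRegular hκ' hrange).2 (by
      rintro _ ⟨n, rfl⟩
      exact (hg n).2)
  · obtain ⟨n, hn⟩ := mem_iUnion.1 hx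
    have hFx : F x ⊆ g (n + 1) :=
      hg_succ n ▸ subset_union_of_subset_right (subset_biUnion_of_mem hn) _
    exact hFx.trans (subset_iUnion g (n + 1))

theorem isClubIn_closedUnder (hκ : κ.IsRegular) (hunc : ℵ₀ < κ)
    (hFY : ∀ x ∈ Y, F x ⊆ Y) (hF : ∀ x ∈ Y, #(F x) < lift.{1} κ) :
    IsClubIn κ {M | M ⊆ Y ∧ #M < lift.{1} κ}
      {M | (M ⊆ Y ∧ #M < lift.{1} κ) ∧ ∀ x ∈ M, F x ⊆ M} := by
  refine ⟨fun M hM => hM.1, fun M₀ hM₀ => ?_, fun δ _ hδ f hf _ => ?_⟩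
  · obtain ⟨M, hM, hclosed, hsub⟩ := exists_closedUnder_superset hκ hunc hFY hF hM₀
    exact ⟨M, ⟨hM, hclosed⟩, hsub⟩
  have hsub (β) (hβ : β ∈ Iio δ) : f β ⊆ ⋃ γ ∈ Iio δ, f γ := subset_biUnion_of_mem hβ
  refine ⟨⟨iUnion₂_subset fun β hβ => (hf β hβ).1.1, ?_⟩, fun x hx => ?_⟩
  · have hδ' : #(Iio δ) < lift.{1} κ := by
      rwa [Cardinal.mk_Iio_ordinal, lift_lt]
    exact (card_biUnion_lt_iff_forall_of_isRegular hκ.lift hδ').2 fun β hβ => (hf β hβ).1.2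
  · obtain ⟨β, hβ, hxβ⟩ := mem_iUnion₂.1 hx
    exact ((hf β hβ).2 x hxβ).trans (hsub β hβ)

end ClosedUnder

def traceSet (κ lam : Cardinal.{0}) (d : Set Ordinal → Set Ordinal) (c : Set Ordinal) :
    Set (Set Ordinal) :=
  {x | ∃ a ∈ Pk κ lam, c ⊆ a ∧ x = d a ∩ c}

def slenderWitnesses (κ lam : Cardinal.{0}) (d : Set Ordinal → Set Ordinal)
    (cover : Set Ordinal → Set Ordinal) (b : Set Ordinal) : Set ZFSet :=
  Ordinal.toZFSet '' cover b ∪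
    (fun v => codeBelow lam.ord (v ∩ b)) '' traceSet κ lam d (cover b)

section SlenderWitnesses

variable {κ lam : Cardinal.{0}} {d : Set Ordinal → Set Ordinal}
  {cover : Set Ordinal → Set Ordinal}

theorem slenderWitnesses_subset_HSet {θ : Cardinal.{0}} (hθ : lam < θ)
    (hcover : ∀ b, cover b ∈ Pk κ lam) (b : Set Ordinal) :
    slenderWitnesses κ lam d cover b ⊆ HSet θ := by
  rintro _ (⟨α, hα, rfl⟩ | ⟨v, -, rfl⟩)
  · exact toZFSet_mem_HSet ((lt_ord.1 ((hcover b).1 α hα)).trans hθ)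
  · exact codeBelow_mem_HSet (by rwa [card_ord]) _

theorem mk_slenderWitnesses_lt (hκ : ℵ₀ ≤ κ) (hcover : ∀ b, cover b ∈ Pk κ lam)
    (hthin : ∀ b, #(traceSet κ lam d (cover b)) < lift.{1} κ) (b : Set Ordinal) :
    #(slenderWitnesses κ lam d cover b) < lift.{1} κ :=
  (mk_union_le _ _).trans_lt <| add_lt_of_lt (aleph0_le_lift.2 hκ)
    (mk_image_le.trans_lt (hcover b).2) (mk_image_le.trans_lt (hthin b))

theorem exists_codesSet_inter_of_closedUnder (hunc : ℵ₀ < κ)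
    (hcover : ∀ b, cover b ∈ Pk κ lam) (hsub_cover : ∀ b ∈ Pk κ lam, b ⊆ cover b)
    {M : Set ZFSet.{0}} (hM : #M < lift.{1} κ)
    (hclosed : ∀ x ∈ M, slenderWitnesses κ lam d cover {α | α.toZFSet ∈ x} ⊆ M)
    {b : Set Ordinal} (hb : b.Countable) (hb_lt : ∀ α ∈ b, α < lam.ord)
    {x : ZFSet} (hxM : x ∈ M) (hx : CodesSet x b) :
    ∃ y ∈ M, CodesSet y (d (ordsOf lam M) ∩ b) := by
  have hW := hclosed x hxM
  rw [← hx.eq_setOf] at hW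
  have hbc : b ⊆ cover b := hsub_cover b (countable_mem_Pk hunc hb hb_lt)
  have hcM : cover b ⊆ ordsOf lam M := fun α hα =>
    mem_ordsOf.2 ⟨(hcover b).1 α hα, hW (Or.inl ⟨α, hα, rfl⟩)⟩
  have hMPk : ordsOf lam M ∈ Pk κ lam :=
    ⟨fun α hα => (mem_ordsOf.1 hα).1, (mk_ordsOf_le lam M).trans_lt hM⟩
  refine ⟨_, hW (Or.inr ⟨_, ⟨_, hMPk, hcM, rfl⟩, rfl⟩), ?_⟩
  convert codesSet_codeBelow lam.ord (d (ordsOf lam M) ∩ cover b ∩ b) using 1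
  rw [inter_assoc (d _), inter_eq_right.2 hbc, inter_assoc,
    inter_eq_left.2 (show b ⊆ Iio lam.ord from hb_lt)]

end SlenderWitnesses

theorem thin_implies_slender_general (κ lam : Cardinal.{0})
    (hreg : κ.IsRegular) (hunc : ℵ₀ < κ)
    (d : Set Ordinal → Set Ordinal)
    (hthin : IsThin κ lam d) :
    IsSlender κ lam d := by
  obtain ⟨C₀, hC₀, hthin⟩ := hthin
  obtain ⟨cover, hcover⟩ :=
    hC₀.exists_cover ⟨∅, countable_mem_Pk hunc countable_empty (by simp)⟩
  have hcover_Pk (b : Set Ordinal) : cover b ∈ Pk κ lam := hC₀.1 (hcover b).1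
  refine ⟨Order.succ lam, fun θ hθ _ => ⟨_, isClubIn_closedUnder hreg hunc
    (F := fun x => slenderWitnesses κ lam d cover {α | α.toZFSet ∈ x})
    (fun _ _ => slenderWitnesses_subset_HSet (Order.succ_le_iff.1 hθ) hcover_Pk _)
    (fun _ _ => mk_slenderWitnesses_lt hreg.aleph0_le hcover_Pk
      (fun b => hthin _ (hcover b).1) _), ?_⟩⟩
  rintro M ⟨⟨-, hM⟩, hclosed⟩ b hb hb_lt ⟨x, hxM, hx⟩
  exact exists_codesSet_inter_of_closedUnder hunc hcover_Pk (fun b => (hcover b).2) hM hclosed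
    hb hb_lt hxM hx

theorem thin_implies_slender (κ lam : Cardinal.{0})
    (hreg : κ.IsRegular) (hunc : ℵ₀ < κ) (hle : κ ≤ lam)
    (d : Set Ordinal → Set Ordinal) (hlist : IsList κ lam d)
    (hthin : IsThin κ lam d) :
    IsSlender κ lam d :=
  thin_implies_slender_general κ lam hreg hunc d hthin
end

section
/- An inaccessible cardinal κ is ineffable if and only if ITP(κ,κ) holds. -/
open Cardinal Set

/-!
Everything is transferred along `α ↦ Iio α`. An ordinal club `C ⊆ κ` yields the club
`{Iio α | α ∈ C}` of `P_κ κ`; conversely, a club of `P_κ κ` contains `Iio α` for all `α` in an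
ordinal club: run a `⊆`-increasing chain `a_β` through it with `β ∈ a_β`, and at every closure
point `α` of `β ↦ sup a_β` the union of the chain below `α` is exactly `Iio α`. So stationary
subsets of `κ` give stationary families of initial segments, and ineffable branches of a
`κ`-list `d_α` and of the `P_κ κ`-list `d_{Iio α}` correspond. Thinness is free since `κ` is a
strong limit: a `c ∈ P_κ κ` has fewer than `κ` subsets.
-/

theorem IsStatIn.mono {X : Type*} {κ : Cardinal.{0}} {S T T' : Set (Set X)}
    (hT : IsStatIn κ S T) (hTT' : T ⊆ T') (hT'S : T' ⊆ S) : IsStatIn κ S T' :=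
  ⟨hT'S, fun C hC => (hT.2 C hC).mono (inter_subset_inter_left C hTT')⟩

theorem OrdClub.sSup_mem {o : Ordinal.{0}} {C s : Set Ordinal.{0}} (hC : OrdClub o C)
    (hsC : s ⊆ C) (hs : s.Nonempty) (hso : sSup s < o) : sSup s ∈ C := by
  by_cases hmem : sSup s ∈ s
  · exact hsC hmem
  have hbdd : BddAbove s := ⟨o, fun x hx => (hC.1 (hsC hx)).le⟩
  have hlt : ∀ x ∈ s, x < sSup s := fun x hx =>
    (le_csSup hbdd hx).lt_of_ne fun h => hmem (h ▸ hx)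
  obtain ⟨x, hx⟩ := hs
  refine hC.2.2 _ hso (zero_le.trans_lt (hlt x hx)) (le_antisymm ?_ ?_)
  · exact csSup_le ⟨x, hsC hx, hlt x hx⟩ fun y hy => hy.2.le
  · exact csSup_le_csSup ⟨o, fun y hy => (hC.1 hy.1).le⟩ ⟨x, hx⟩ fun y hy => ⟨hsC hy, hlt y hy⟩

theorem lt_sSup_image_add_one {s : Set Ordinal.{0}} (hs : BddAbove s) {x : Ordinal.{0}}
    (hx : x ∈ s) : x < sSup ((· + 1) '' s) :=
  (Order.lt_add_one_iff.2 le_rfl).trans_le <|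
    le_csSup ((Monotone.map_bddAbove (fun _ _ h => by gcongr)) hs) ⟨x, hx, rfl⟩

section

variable {κ : Cardinal.{0}}

theorem Iio_mem_Pk {α : Ordinal.{0}} (hα : α < κ.ord) : Iio α ∈ Pk κ κ :=
  ⟨fun _ hβ => hβ.trans hα, by
    rw [Cardinal.mk_Iio_ordinal, Cardinal.lift_lt]
    exact Cardinal.lt_ord.1 hα⟩

theorem insert_mem_Pk (hκ : ℵ₀ ≤ κ) {x : Ordinal.{0}} {a : Set Ordinal.{0}} (hx : x < κ.ord)
    (ha : a ∈ Pk κ κ) : insert x a ∈ Pk κ κ := by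
  refine ⟨forall_mem_insert.2 ⟨hx, ha.1⟩, Cardinal.mk_insert_le.trans_lt ?_⟩
  have hκ' : ℵ₀ ≤ Cardinal.lift.{1} κ := by simpa using Cardinal.lift_le.{1}.2 hκ
  exact Cardinal.add_lt_of_lt hκ' ha.2 (Cardinal.one_lt_aleph0.trans_le hκ')

theorem biUnion_Iio_mem_Pk (hκ : κ.IsRegular) {δ : Ordinal.{0}} (hδ : δ.card < κ)
    {f : Ordinal.{0} → Set Ordinal.{0}} (hf : ∀ β < δ, f β ∈ Pk κ κ) :
    (⋃ β ∈ Iio δ, f β) ∈ Pk κ κ := by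
  refine ⟨fun x hx => ?_, (Cardinal.mk_biUnion_le f (Iio δ)).trans_lt ?_⟩
  · obtain ⟨β, hβ, hxβ⟩ := mem_iUnion₂.1 hx
    exact (hf β hβ).1 x hxβ
  have hδ' : #(Iio δ) < Cardinal.lift.{1} κ := by
    rwa [Cardinal.mk_Iio_ordinal, Cardinal.lift_lt]
  refine Cardinal.mul_lt_of_lt (by simpa using Cardinal.lift_le.{1}.2 hκ.aleph0_le) hδ' ?_
  exact Cardinal.iSup_lt_of_lt_cof_ord (by rwa [hκ.lift.cof_ord]) fun β => (hf β β.2).2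

theorem isClubIn_Pk_self (hκ : κ.IsRegular) : IsClubIn κ (Pk κ κ) (Pk κ κ) :=
  ⟨subset_rfl, fun a ha => ⟨a, ha, subset_rfl⟩,
    fun _ _ hδ _ hf _ => biUnion_Iio_mem_Pk hκ hδ hf⟩

theorem bddAbove_of_mem_Pk {lam : Cardinal.{0}} {a : Set Ordinal.{0}} (ha : a ∈ Pk κ lam) :
    BddAbove a :=
  ⟨lam.ord, fun x hx => (ha.1 x hx).le⟩

theorem sSup_image_add_one_lt_of_mem_Pk (hκ : κ.IsRegular) {a : Set Ordinal.{0}}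
    (ha : a ∈ Pk κ κ) : sSup ((· + 1) '' a) < κ.ord :=
  Ordinal.sSup_add_one_lt_of_lt_cof (by rw [← Ordinal.lift_cof, hκ.cof_ord]; exact ha.2) ha.1

theorem exists_subset_Iio_of_mem_Pk (hκ : κ.IsRegular) {a : Set Ordinal.{0}}
    (ha : a ∈ Pk κ κ) : ∃ b < κ.ord, a ⊆ Iio b :=
  ⟨_, sSup_image_add_one_lt_of_mem_Pk hκ ha,
    fun _ hx => lt_sSup_image_add_one (bddAbove_of_mem_Pk ha) hx⟩

theorem isThin_of_isStrongLimit (hκ : κ.IsRegular) (hκs : κ.IsStrongLimit)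
    (d : Set Ordinal.{0} → Set Ordinal.{0}) : IsThin κ κ d := by
  refine ⟨Pk κ κ, isClubIn_Pk_self hκ, fun c hc => ?_⟩
  refine (Cardinal.mk_le_mk_of_subset (t := 𝒫 c) ?_).trans_lt ?_
  · rintro _ ⟨a, -, -, rfl⟩
    exact inter_subset_right
  obtain ⟨μ, hμ, hcμ⟩ := Cardinal.lt_lift_iff.1 hc.2
  rw [Cardinal.mk_powerset, ← hcμ, ← Cardinal.lift_two_power, Cardinal.lift_lt]
  exact hκs.isStrongPrelimit hμ

theorem isClubIn_image_Iio (hκ : κ.IsRegular) {C : Set Ordinal.{0}} (hC : OrdClub κ.ord C) :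
    IsClubIn κ (Pk κ κ) (Iio '' C) := by
  have hCPk : Iio '' C ⊆ Pk κ κ := image_subset_iff.2 fun α hα => Iio_mem_Pk (hC.1 hα)
  refine ⟨hCPk, fun a ha => ?_, ?_⟩
  · obtain ⟨b, hb, hab⟩ := exists_subset_Iio_of_mem_Pk hκ ha
    obtain ⟨γ, hγC, hbγ⟩ := hC.2.1 b hb
    exact ⟨Iio γ, mem_image_of_mem _ hγC, hab.trans (Iio_subset_Iio hbγ)⟩
  intro δ hδ hδκ f hfC _
  set s := {γ ∈ C | ∃ β < δ, f β = Iio γ}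
  have hunion : (⋃ β ∈ Iio δ, f β) = ⋃ γ ∈ s, Iio γ := by
    ext x
    simp only [mem_iUnion, exists_prop]
    constructor
    · rintro ⟨β, hβ, hx⟩
      obtain ⟨γ, hγC, hγ⟩ := hfC β hβ
      exact ⟨γ, ⟨hγC, β, hβ, hγ.symm⟩, hγ ▸ hx⟩
    · rintro ⟨γ, ⟨-, β, hβ, hγ⟩, hx⟩
      exact ⟨β, hβ, hγ ▸ hx⟩
  obtain ⟨b, hb, hub⟩ := exists_subset_Iio_of_mem_Pk hκ
    (biUnion_Iio_mem_Pk hκ hδκ fun β hβ => hCPk (hfC β hβ))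
  have hsb : ∀ γ ∈ s, γ ≤ b := fun γ hγ =>
    Iio_subset_Iio_iff.1 ((subset_biUnion_of_mem (u := Iio) hγ).trans (hunion ▸ hub))
  have hs : s.Nonempty := by
    obtain ⟨γ, hγC, hγ⟩ := hfC 0 hδ
    exact ⟨γ, hγC, 0, hδ, hγ.symm⟩
  rw [hunion, (isLUB_csSup hs ⟨b, hsb⟩).biUnion_Iio_eq]
  exact mem_image_of_mem _ (hC.sSup_mem (fun γ hγ => hγ.1) hs ((csSup_le hs hsb).trans_lt hb))

theorem ordClub_setOf_forall_lt (hκ : κ.IsRegular) (hℵ : ℵ₀ < κ) {F : Ordinal.{0} → Ordinal.{0}}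
    (hF : ∀ β < κ.ord, F β < κ.ord) :
    OrdClub κ.ord {α | α < κ.ord ∧ 0 < α ∧ ∀ β < α, F β < α} := by
  refine ⟨fun α hα => hα.1, fun β₀ hβ₀ => ?_, fun α hα hα0 hsup => ⟨hα, hα0, fun β hβ => ?_⟩⟩
  · set f : Ordinal.{0} → Ordinal.{0} := fun x => ⨆ β : Iic x, (F β + 1)
    have hFf : ∀ x, ∀ β ≤ x, F β < f x := fun x β hβ =>
      (Order.lt_add_one_iff.2 le_rfl).trans_le
        (Ordinal.le_iSup (fun β : Iic x => F β + 1) ⟨β, hβ⟩)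
    have hf : ∀ x < κ.ord, f x < κ.ord := fun x hx => by
      refine Ordinal.lift_iSup_add_one_lt_of_lt_cof ?_ fun β => hF β (β.2.trans_lt hx)
      rw [← Order.Iio_succ, Cardinal.mk_Iio_ordinal, Cardinal.lift_lift, ← Ordinal.lift_cof,
        hκ.cof_ord, Cardinal.lift_lt]
      exact Cardinal.lt_ord.1 ((Cardinal.isSuccLimit_ord hκ.aleph0_le).succ_lt hx)
    refine ⟨Ordinal.nfp f β₀, ⟨Ordinal.nfp_lt_ord (by rwa [hκ.cof_ord]) hf hβ₀,
      zero_le.trans_lt ((hFf β₀ β₀ le_rfl).trans_le (Ordinal.iterate_le_nfp f β₀ 1)),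
      fun β hβ => ?_⟩, Ordinal.le_nfp f β₀⟩
    obtain ⟨n, hn⟩ := Ordinal.lt_nfp_iff.1 hβ
    calc F β < f (f^[n] β₀) := hFf _ β hn.le
      _ = f^[n + 1] β₀ := (Function.iterate_succ_apply' f n β₀).symm
      _ ≤ Ordinal.nfp f β₀ := Ordinal.iterate_le_nfp f β₀ (n + 1)
  · obtain ⟨γ, ⟨hγ, hγα⟩, hβγ⟩ :=
      (lt_csSup_iff' ⟨α, fun γ hγ => hγ.2.le⟩).1 (hsup.symm ▸ hβ)
    exact (hγ.2.2 β hβγ).trans hγα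

theorem IsClubIn.exists_chain (hκ : κ.IsRegular) {C : Set (Set Ordinal.{0})}
    (hC : IsClubIn κ (Pk κ κ) C) :
    ∃ a : Ordinal.{0} → Set Ordinal.{0},
      ∀ β < κ.ord, a β ∈ C ∧ β ∈ a β ∧ ∀ γ < β, a γ ⊆ a β := by
  choose! c hcC hc using hC.2.1
  let a : Ordinal.{0} → Set Ordinal.{0} :=
    Ordinal.lt_wf.fix fun β a => c (insert β (⋃ γ : Iio β, a γ γ.2))
  have ha : ∀ β, a β = c (insert β (⋃ γ ∈ Iio β, a γ)) := fun β => by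
    rw [biUnion_eq_iUnion]
    exact Ordinal.lt_wf.fix_eq _ β
  refine ⟨a, fun β => ?_⟩
  induction β using WellFoundedLT.induction with
  | _ β ih =>
    intro hβ
    have hmem : insert β (⋃ γ ∈ Iio β, a γ) ∈ Pk κ κ :=
      insert_mem_Pk hκ.aleph0_le hβ (biUnion_Iio_mem_Pk hκ (Cardinal.lt_ord.1 hβ)
        fun γ hγ => hC.1 (ih γ hγ (hγ.trans hβ)).1)
    rw [ha β]
    exact ⟨hcC _ hmem, hc _ hmem (mem_insert _ _),
      fun γ hγ => (subset_biUnion_of_mem (u := a) hγ).trans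
        ((subset_insert _ _).trans (hc _ hmem))⟩

theorem IsClubIn.exists_ordClub_Iio_mem (hκ : κ.IsRegular) (hℵ : ℵ₀ < κ)
    {C : Set (Set Ordinal.{0})} (hC : IsClubIn κ (Pk κ κ) C) :
    ∃ E, OrdClub κ.ord E ∧ ∀ α ∈ E, Iio α ∈ C := by
  obtain ⟨a, ha⟩ := hC.exists_chain hκ
  have haPk : ∀ β < κ.ord, a β ∈ Pk κ κ := fun β hβ => hC.1 (ha β hβ).1
  refine ⟨_, ordClub_setOf_forall_lt hκ hℵ fun β hβ =>
    sSup_image_add_one_lt_of_mem_Pk hκ (haPk β hβ), ?_⟩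
  rintro α ⟨hακ, hα0, hαa⟩
  have hunion : (⋃ β ∈ Iio α, a β) = Iio α := by
    refine Subset.antisymm (iUnion₂_subset fun β hβ x hx => ?_) fun x hx => ?_
    · exact (lt_sSup_image_add_one (bddAbove_of_mem_Pk (haPk β (hβ.trans hακ))) hx).trans
        (hαa β hβ)
    · exact mem_biUnion hx (ha x (hx.trans hακ)).2.1
  rw [← hunion]
  refine hC.2.2 α hα0 (Cardinal.lt_ord.1 hακ) a (fun β hβ => (ha β (hβ.trans hακ)).1)
    fun β γ hβγ hγ => ?_
  obtain rfl | hβγ := hβγ.eq_or_lt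
  · exact subset_rfl
  · exact (ha γ (hγ.trans hακ)).2.2 β hβγ

theorem OrdStat.isStatIn_image_Iio (hκ : κ.IsRegular) (hℵ : ℵ₀ < κ) {S : Set Ordinal.{0}}
    (hS : OrdStat κ.ord S) : IsStatIn κ (Pk κ κ) (Iio '' S) := by
  refine ⟨image_subset_iff.2 fun α hα => Iio_mem_Pk (hS.1 hα), fun C hC => ?_⟩
  obtain ⟨E, hE, hEC⟩ := hC.exists_ordClub_Iio_mem hκ hℵ
  obtain ⟨α, hαS, hαE⟩ := hS.2 E hE
  exact ⟨Iio α, mem_image_of_mem _ hαS, hEC α hαE⟩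

theorem ITP_of_isIneffableCard (hκ : κ.IsRegular) (hℵ : ℵ₀ < κ) (h : IsIneffableCard κ) :
    ITP κ κ := by
  intro d hd _
  obtain ⟨e, he, hS⟩ := h (fun α => d (Iio α)) fun α hα => hd _ (Iio_mem_Pk hα)
  refine ⟨e, he, (hS.isStatIn_image_Iio hκ hℵ).mono ?_ fun a ha => ha.1⟩
  rintro _ ⟨α, ⟨hα, heα⟩, rfl⟩
  exact ⟨Iio_mem_Pk hα, heα⟩

theorem isIneffableCard_of_ITP (hκ : κ.IsRegular) (hκs : κ.IsStrongLimit) (h : ITP κ κ) :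
    IsIneffableCard κ := by
  intro d hd
  let D : Set Ordinal.{0} → Set Ordinal.{0} := fun a => {ξ ∈ a | ∃ α, a = Iio α ∧ ξ ∈ d α}
  have hD : ∀ α < κ.ord, D (Iio α) = d α := fun α hα => by
    ext ξ
    refine ⟨fun ⟨_, α', hα', hξ⟩ => Iio_injective hα' ▸ hξ, fun hξ => ⟨hd α hα hξ, α, rfl, hξ⟩⟩
  obtain ⟨e, he, hT⟩ := h D (fun _ _ _ hξ => hξ.1) (isThin_of_isStrongLimit hκ hκs D)
  refine ⟨e, he, fun α hα => hα.1, fun C hC => ?_⟩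
  obtain ⟨_, ⟨-, heα⟩, α, hαC, rfl⟩ := hT.2 _ (isClubIn_image_Iio hκ hC)
  have hακ : α < κ.ord := hC.1 hαC
  exact ⟨α, ⟨hακ, heα.trans (hD α hακ)⟩, hαC⟩

end

theorem inaccessible_ineffable_iff_ITP (κ : Cardinal.{0})
    (hκ : κ.IsInaccessible) :
    IsIneffableCard κ ↔ ITP κ κ :=
  ⟨ITP_of_isIneffableCard hκ.isRegular hκ.aleph0_lt,
    isIneffableCard_of_ITP hκ.isRegular hκ.isStrongLimit⟩
end

section
/- A regular uncountable cardinal κ is strongly compact if and only if for every λ ≥ κ, every P_κλ-list has a cofinal branch. -/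
open Cardinal Set

/-! If `U` is a `κ`-complete fine ultrafilter on `P_κ λ`, the ordinals `α` with
`{z | α ∈ d_z} ∈ U` form a cofinal branch of `d`: by completeness, the fewer than `κ` decisions
of `U` concerning the ordinals of `a` are all realised by a single `z ⊇ a`.

Conversely, code the subsets `A` of `P_κ λ` injectively by ordinals `c A < μ = 2^(2^λ)` and let
`d_b ⊆ b` consist of the codes of those `A` with `b ∩ λ ∈ A`. A cofinal branch `e` of this
`P_κ μ`-list defines `U = {A | c A ∈ e}`; cofinality says that any fewer than `κ` sets are
decided by `U` as by the principal ultrafilter at some `z ∩ λ`, which makes `U` a `κ`-complete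
fine ultrafilter. -/

universe u

lemma exists_injOn_mapsTo_of_mk_le {α β : Type u} [Nonempty β] {s : Set α} {t : Set β}
    (h : #s ≤ #t) : ∃ f : α → β, Set.InjOn f s ∧ Set.MapsTo f s t := by
  classical
  obtain ⟨g⟩ := h
  refine ⟨fun a => if ha : a ∈ s then g ⟨a, ha⟩ else Classical.arbitrary β,
    fun a ha b hb hab => ?_, fun a ha => by simp [ha]⟩
  exact congrArg Subtype.val (g.injective (Subtype.ext (by simpa [ha, hb] using hab)))

namespace IsUFOn

variable {α : Type*} {X : Set α} {U : Set (Set α)}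

lemma nonempty_of_mem (hU : IsUFOn X U) {A : Set α} (hA : A ∈ U) : A.Nonempty :=
  Set.nonempty_iff_ne_empty.2 fun h => hU.2.2.1 (h ▸ hA)

lemma setOf_mem_iff_mem (hU : IsUFOn X U) {B : Set α} (hB : B ⊆ X) :
    {x ∈ X | x ∈ B ↔ B ∈ U} ∈ U := by
  by_cases hBU : B ∈ U
  · convert hBU using 1
    ext x
    simpa [hBU] using fun hx => hB hx
  · convert (hU.2.2.2.2.2 B hB).resolve_left hBU using 1
    ext x
    simp [hBU]

end IsUFOn

lemma KComplete.inter_biInter_mem {κ : Cardinal.{0}} {X : Set (Set Ordinal.{0})}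
    {U : Set (Set (Set Ordinal.{0}))} (hU : KComplete κ X U) {a : Set Ordinal.{0}}
    {f : Ordinal.{0} → Set (Set Ordinal.{0})} (hf : ∀ α ∈ a, f α ∈ U)
    (ha : #a < Cardinal.lift.{1} κ) : X ∩ ⋂ α ∈ a, f α ∈ U := by
  rw [← Set.sInter_image]
  exact hU _ (Set.image_subset_iff.2 hf) (Cardinal.mk_image_le.trans_lt ha)

section Pk

variable {κ lam : Cardinal.{0}}

lemma mk_lt_lift_of_finite (hκ : ℵ₀ ≤ κ) {β : Type 1} {t : Set β} (ht : t.Finite) :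
    #t < Cardinal.lift.{1} κ :=
  ht.lt_aleph0.trans_le (Cardinal.aleph0_le_lift.2 hκ)

lemma empty_mem_Pk (hκ : ℵ₀ ≤ κ) : ∅ ∈ Pk κ lam :=
  ⟨fun _ h => h.elim, mk_lt_lift_of_finite hκ Set.finite_empty⟩

lemma singleton_mem_Pk (hκ : ℵ₀ ≤ κ) {α : Ordinal.{0}} (hα : α < lam.ord) : {α} ∈ Pk κ lam :=
  ⟨by simpa using hα, mk_lt_lift_of_finite hκ (Set.finite_singleton α)⟩

lemma inter_Iio_mem_Pk {μ : Cardinal.{0}} {z : Set Ordinal.{0}} (hz : z ∈ Pk κ μ) :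
    z ∩ Set.Iio lam.ord ∈ Pk κ lam :=
  ⟨fun _ hα => hα.2, (Cardinal.mk_le_mk_of_subset Set.inter_subset_left).trans_lt hz.2⟩

lemma mk_powerset_Pk_le (κ lam : Cardinal.{0}) :
    #(𝒫 Pk κ lam) ≤ #(Set.Iio ((2 : Cardinal.{0}) ^ (2 : Cardinal.{0}) ^ lam).ord) := by
  have hPk : #(Pk κ lam) ≤ #(𝒫 Set.Iio lam.ord) :=
    Cardinal.mk_le_mk_of_subset fun a ha => ha.1
  rw [Cardinal.mk_powerset, Cardinal.mk_Iio_ordinal, Cardinal.card_ord]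
  rw [Cardinal.mk_powerset, Cardinal.mk_Iio_ordinal, Cardinal.card_ord] at hPk
  simpa using Cardinal.power_le_power_left two_ne_zero hPk

end Pk

theorem isCofBranch_of_ultrafilter {κ lam : Cardinal.{0}} {U : Set (Set (Set Ordinal.{0}))}
    (hU : IsUFOn (Pk κ lam) U) (hcomp : KComplete κ (Pk κ lam) U) (hfine : Fine κ lam U)
    (d : Set Ordinal.{0} → Set Ordinal.{0}) :
    IsCofBranch κ lam d {α | α < lam.ord ∧ {z ∈ Pk κ lam | α ∈ d z} ∈ U} := by
  refine ⟨fun α hα => hα.1, fun a ha => ?_⟩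
  let B α := {z ∈ Pk κ lam | α ∈ d z}
  have hdecide : ∀ α ∈ a, {z ∈ Pk κ lam | z ∈ B α ↔ B α ∈ U} ∩ {z ∈ Pk κ lam | α ∈ z} ∈ U :=
    fun α hα => hU.2.2.2.2.1 _ (hU.setOf_mem_iff_mem fun _ hz => hz.1) _ (hfine α (ha.1 α hα))
  obtain ⟨z, hz, hzmem⟩ := hU.nonempty_of_mem (hcomp.inter_biInter_mem hdecide ha.2)
  simp only [Set.mem_iInter] at hzmem
  refine ⟨z, hz, fun α hα => (hzmem α hα).2.2, ?_⟩
  ext α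
  refine and_congr_left fun hα => ?_
  have hdec : α ∈ d z ↔ B α ∈ U := by simpa [B, hz] using (hzmem α hα).1.2
  simp [ha.1 α hα, B, hdec]

def IsLocallyPrincipal (κ lam : Cardinal.{0}) (U : Set (Set (Set Ordinal.{0}))) : Prop :=
  ∀ s ⊆ 𝒫 Pk κ lam, #s < Cardinal.lift.{1} κ → ∀ t ∈ Pk κ lam,
    ∃ x ∈ Pk κ lam, t ⊆ x ∧ ∀ A ∈ s, A ∈ U ↔ x ∈ A

namespace IsLocallyPrincipal

variable {κ lam : Cardinal.{0}} {U : Set (Set (Set Ordinal.{0}))}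

lemma exists_of_finite (hκ : ℵ₀ ≤ κ) (hP : IsLocallyPrincipal κ lam U)
    {s : Set (Set (Set Ordinal.{0}))} (hs : s ⊆ 𝒫 Pk κ lam) (hfin : s.Finite) :
    ∃ x ∈ Pk κ lam, ∀ A ∈ s, A ∈ U ↔ x ∈ A := by
  obtain ⟨x, hx, -, hxs⟩ := hP s hs (mk_lt_lift_of_finite hκ hfin) ∅ (empty_mem_Pk hκ)
  exact ⟨x, hx, hxs⟩

lemma isUFOn (hκ : ℵ₀ ≤ κ) (hUX : ∀ A ∈ U, A ⊆ Pk κ lam) (hP : IsLocallyPrincipal κ lam U) :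
    IsUFOn (Pk κ lam) U := by
  refine ⟨hUX, ?_, fun hempty => ?_, fun A hA B hAB hB => ?_, fun A hA B hB => ?_, fun A hA => ?_⟩
  · obtain ⟨x, hx, hxs⟩ := hP.exists_of_finite hκ (s := {Pk κ lam}) (by simp) (by simp)
    exact (hxs _ rfl).2 hx
  · obtain ⟨x, -, hxs⟩ := hP.exists_of_finite hκ (s := {∅}) (by simp) (by simp)
    exact (hxs _ rfl).1 hempty
  · obtain ⟨x, -, hxs⟩ := hP.exists_of_finite hκ (s := {A, B})
      (by simp [Set.insert_subset_iff, hUX A hA, hB]) (by simp)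
    exact (hxs B (by simp)).2 (hAB ((hxs A (by simp)).1 hA))
  · obtain ⟨x, -, hxs⟩ := hP.exists_of_finite hκ (s := {A, B, A ∩ B})
      (by simp [Set.insert_subset_iff, hUX A hA, hUX B hB, Set.inter_subset_left.trans (hUX A hA)])
      (by simp)
    exact (hxs _ (by simp)).2 ⟨(hxs A (by simp)).1 hA, (hxs B (by simp)).1 hB⟩
  · obtain ⟨x, hx, hxs⟩ := hP.exists_of_finite hκ (s := {A, Pk κ lam \ A})
      (by simp [Set.insert_subset_iff, hA]) (by simp)
    by_cases hxA : x ∈ A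
    · exact Or.inl ((hxs A (by simp)).2 hxA)
    · exact Or.inr ((hxs _ (by simp)).2 ⟨hx, hxA⟩)

lemma kComplete (hκ : ℵ₀ ≤ κ) (hUX : ∀ A ∈ U, A ⊆ Pk κ lam) (hP : IsLocallyPrincipal κ lam U) :
    KComplete κ (Pk κ lam) U := by
  intro s hsU hs
  have hκ' : ℵ₀ ≤ Cardinal.lift.{1} κ := Cardinal.aleph0_le_lift.2 hκ
  obtain ⟨x, hx, -, hxs⟩ := hP (insert (Pk κ lam ∩ ⋂₀ s) s)
    (Set.insert_subset Set.inter_subset_left fun A hA => hUX A (hsU hA))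
    (Cardinal.mk_insert_le.trans_lt
      (Cardinal.add_lt_of_lt hκ' hs (Cardinal.one_lt_aleph0.trans_le hκ')))
    ∅ (empty_mem_Pk hκ)
  exact (hxs _ (Set.mem_insert _ _)).2
    ⟨hx, fun A hA => (hxs A (Set.mem_insert_of_mem _ hA)).1 (hsU hA)⟩

lemma fine (hκ : ℵ₀ ≤ κ) (hP : IsLocallyPrincipal κ lam U) : Fine κ lam U := by
  intro α hα
  obtain ⟨x, hx, hαx, hxs⟩ := hP {{a ∈ Pk κ lam | α ∈ a}} (by simp [Set.sep_subset])
    (mk_lt_lift_of_finite hκ (Set.finite_singleton _)) {α} (singleton_mem_Pk hκ hα)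
  exact (hxs _ rfl).2 ⟨hx, hαx rfl⟩

end IsLocallyPrincipal

theorem isLocallyPrincipal_of_isCofBranch {κ lam μ : Cardinal.{0}} (hκ : ℵ₀ ≤ κ) (hlam : lam ≤ μ)
    {c : Set (Set Ordinal.{0}) → Ordinal.{0}} (hinj : Set.InjOn c (𝒫 Pk κ lam))
    (hmaps : Set.MapsTo c (𝒫 Pk κ lam) (Set.Iio μ.ord)) {e : Set Ordinal.{0}}
    (he : IsCofBranch κ μ (fun b => b ∩ c '' {A ∈ 𝒫 Pk κ lam | b ∩ Set.Iio lam.ord ∈ A}) e) :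
    IsLocallyPrincipal κ lam {A ∈ 𝒫 Pk κ lam | c A ∈ e} := by
  intro s hs hsκ t ht
  have ha : c '' s ∪ t ∈ Pk κ μ := by
    refine ⟨?_, (Cardinal.mk_union_le _ _).trans_lt (Cardinal.add_lt_of_lt
      (Cardinal.aleph0_le_lift.2 hκ) (Cardinal.mk_image_le.trans_lt hsκ) ht.2)⟩
    rintro _ (⟨A, hA, rfl⟩ | hα)
    · exact hmaps (hs hA)
    · exact (ht.1 _ hα).trans_le (Cardinal.ord_le_ord.2 hlam)
  obtain ⟨z, hz, haz, hez⟩ := he.2 _ ha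
  refine ⟨z ∩ Set.Iio lam.ord, inter_Iio_mem_Pk hz, fun α hα => ⟨haz (Or.inr hα), ht.1 α hα⟩,
    fun A hA => ?_⟩
  have hcA : c A ∈ c '' s ∪ t := Or.inl ⟨A, hA, rfl⟩
  have hbranch : c A ∈ e ↔ c A ∈ z ∩ c '' {A ∈ 𝒫 Pk κ lam | z ∩ Set.Iio lam.ord ∈ A} := by
    simpa [hcA] using congrArg (c A ∈ ·) hez
  rw [Set.mem_sep_iff, hbranch, Set.mem_inter_iff,
    hinj.mem_image_iff (Set.sep_subset _ _) (hs hA)]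
  exact ⟨fun h => h.2.2.2, fun h => ⟨hs hA, haz hcA, hs hA, h⟩⟩

theorem isStronglyCompact_of_forall_isCofBranch {κ : Cardinal.{0}} (hκ : ℵ₀ ≤ κ)
    (H : ∀ lam : Cardinal.{0}, κ ≤ lam → ∀ d, IsList κ lam d → ∃ e, IsCofBranch κ lam d e) :
    IsStronglyCompact κ := by
  intro lam hlam
  set μ : Cardinal.{0} := (2 : Cardinal.{0}) ^ (2 : Cardinal.{0}) ^ lam
  have hlamμ : lam ≤ μ := ((Cardinal.cantor lam).trans (Cardinal.cantor _)).le
  obtain ⟨c, hinj, hmaps⟩ := exists_injOn_mapsTo_of_mk_le (mk_powerset_Pk_le κ lam)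
  obtain ⟨e, he⟩ := H μ (hlam.trans hlamμ) _ fun b _ => Set.inter_subset_left
  have hP := isLocallyPrincipal_of_isCofBranch hκ hlamμ hinj hmaps he
  exact ⟨_, hP.isUFOn hκ (fun A hA => hA.1), hP.kComplete hκ (fun A hA => hA.1), hP.fine hκ⟩

theorem stronglyCompact_iff_lists_have_cofinal_branches_general (κ : Cardinal.{0})
    (hreg : κ.IsRegular) :
    IsStronglyCompact κ ↔
      ∀ lam : Cardinal.{0}, κ ≤ lam →
        ∀ d, IsList κ lam d → ∃ e, IsCofBranch κ lam d e := by
  refine ⟨fun hsc lam hlam d _ => ?_, isStronglyCompact_of_forall_isCofBranch hreg.aleph0_le⟩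
  obtain ⟨U, hU, hcomp, hfine⟩ := hsc lam hlam
  exact ⟨_, isCofBranch_of_ultrafilter hU hcomp hfine d⟩

theorem stronglyCompact_iff_lists_have_cofinal_branches (κ : Cardinal.{0})
    (hreg : κ.IsRegular) (hunc : ℵ₀ < κ) :
    IsStronglyCompact κ ↔
      ∀ lam : Cardinal.{0}, κ ≤ lam →
        ∀ d, IsList κ lam d → ∃ e, IsCofBranch κ lam d e :=
  stronglyCompact_iff_lists_have_cofinal_branches_general κ hreg
end

section
/- Let κ be a regular uncountable cardinal and λ ≥ κ a cardinal. Then I_IT[κ,λ] ⊆ I_IS[κ,λ]. -/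
open Cardinal Set

/-!
Let `C₀` be a club witnessing that `d` is thin, and let `b ⊆ λ` be countable. Choose `c ∈ C₀` with
`b ⊆ c`: every `d a ∩ b` with `c ⊆ a` restricts one of the fewer than `κ` sets `d a ∩ c`, so fewer
than `κ` codes capture all of them. Asking `M` to contain, for every countable `b ∈ M`, such a `c`
and these codes is a local closure condition, so it holds on a club of `M ∈ P_κ H_θ`. For such `M`
the set `a = M ∩ λ` contains `c`, hence the code of `d a ∩ b` lies in `M`.
-/

theorem isOrdZF_iff_eq_toZFSet {x : ZFSet.{0}} {α : Ordinal.{0}} :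
    IsOrdZF x α ↔ x = α.toZFSet := by
  constructor
  · rintro ⟨hx, rfl⟩
    exact hx.toZFSet_rank_eq.symm
  · rintro rfl
    exact ⟨ZFSet.isOrdinal_toZFSet α, Ordinal.rank_toZFSet α⟩

theorem codesSet_iff {x : ZFSet.{0}} {b : Set Ordinal.{0}} :
    CodesSet x b ↔ (x : Set ZFSet) = Ordinal.toZFSet '' b := by
  simp only [CodesSet, isOrdZF_iff_eq_toZFSet, Set.ext_iff, mem_image, eq_comm]
  exact forall_congr' fun _ => Iff.comm

theorem CodesSet.unique {x : ZFSet.{0}} {b b' : Set Ordinal.{0}} (h : CodesSet x b)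
    (h' : CodesSet x b') : b = b' :=
  image_injective.2 Ordinal.toZFSet_injective ((codesSet_iff.1 h).symm.trans (codesSet_iff.1 h'))

/-- Separating the code out of an ordinal `o ⊇ b` avoids any smallness argument for `b`. -/
noncomputable def codeSet (o : Ordinal.{0}) (b : Set Ordinal.{0}) : ZFSet.{0} :=
  ZFSet.sep (fun x => ∃ α ∈ b, α.toZFSet = x) o.toZFSet

theorem codesSet_codeSet {o : Ordinal.{0}} {b : Set Ordinal.{0}} (hb : b ⊆ Iio o) :
    CodesSet (codeSet o b) b := by
  intro y
  simp only [codeSet, ZFSet.mem_sep, Ordinal.mem_toZFSet_iff, isOrdZF_iff_eq_toZFSet]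
  constructor
  · rintro ⟨-, α, hα, rfl⟩
    exact ⟨α, hα, rfl⟩
  · rintro ⟨α, hα, rfl⟩
    exact ⟨⟨α, hb hα, rfl⟩, α, hα, rfl⟩

theorem mem_HSet_iff {θ : Cardinal.{0}} {x : ZFSet.{0}} :
    x ∈ HSet θ ↔ #x.toSet < lift.{1} θ ∧ ∀ y ∈ x, y ∈ HSet θ :=
  ZFSet.hereditarily_iff

theorem codeSet_mem_HSet {θ : Cardinal.{0}} {o : Ordinal.{0}} {b : Set Ordinal.{0}}
    (hbo : b ⊆ Iio o) (hb : #b < lift.{1} θ) (hθ : ∀ α ∈ b, α.card < θ) :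
    codeSet o b ∈ HSet θ := by
  have hcode := codesSet_iff.1 (codesSet_codeSet hbo)
  refine mem_HSet_iff.2 ⟨?_, fun y hy => ?_⟩
  · change #(codeSet o b : Set ZFSet) < _
    rw [hcode]
    exact mk_image_le.trans_lt hb
  · obtain ⟨α, hα, rfl⟩ : y ∈ Ordinal.toZFSet '' b := hcode ▸ hy
    exact toZFSet_mem_HSet (hθ α hα)

section Closure

variable {X : Type 1} {κ : Cardinal.{0}} {H : Set X} {R : X → Set X → Prop}

theorem mk_iUnion_nat_lt (hreg : κ.IsRegular) (hunc : ℵ₀ < κ) {F : ℕ → Set X}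
    (hF : ∀ n, #(F n) < lift.{1} κ) : #(⋃ n, F n) < lift.{1} κ := by
  rw [← sUnion_range, sUnion_eq_biUnion]
  refine (card_biUnion_lt_iff_forall_of_isRegular hreg.lift ?_).2 ?_
  · have := mk_range_le_lift (f := F)
    rw [mk_nat, lift_aleph0, lift_uzero] at this
    exact this.trans_lt (by simpa using hunc)
  · rintro _ ⟨n, rfl⟩
    exact hF n

theorem exists_superset_forall_mem (hreg : κ.IsRegular) (hunc : ℵ₀ < κ)
    (hT : ∀ x, ∃ T ⊆ H, #T < lift.{1} κ ∧ R x T) (hR : ∀ x, Monotone (R x))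
    {M : Set X} (hMH : M ⊆ H) (hM : #M < lift.{1} κ) :
    ∃ N ⊆ H, #N < lift.{1} κ ∧ M ⊆ N ∧ ∀ x ∈ N, R x N := by
  choose T hTH hTκ hTR using hT
  let step : Set X → Set X := fun N => N ∪ ⋃ x ∈ N, T x
  have step_small : ∀ N ⊆ H, #N < lift.{1} κ → step N ⊆ H ∧ #(step N) < lift.{1} κ :=
    fun N hNH hN => ⟨union_subset hNH (iUnion₂_subset fun x _ => hTH x),
      (mk_union_le _ _).trans_lt (add_lt_of_lt (aleph0_le_lift.2 hreg.aleph0_le) hN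
        ((card_biUnion_lt_iff_forall_of_isRegular hreg.lift hN).2 fun x _ => hTκ x))⟩
  let F : ℕ → Set X := fun n => step^[n] M
  have hF_succ : ∀ n, F (n + 1) = step (F n) := fun n => Function.iterate_succ_apply' step n M
  have hF : ∀ n, F n ⊆ H ∧ #(F n) < lift.{1} κ := by
    intro n
    induction n with
    | zero => exact ⟨hMH, hM⟩
    | succ n ih => exact hF_succ n ▸ step_small _ ih.1 ih.2
  refine ⟨⋃ n, F n, iUnion_subset fun n => (hF n).1, mk_iUnion_nat_lt hreg hunc fun n => (hF n).2,
    subset_iUnion F 0, fun x hx => ?_⟩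
  obtain ⟨n, hn⟩ := mem_iUnion.1 hx
  have hTx : T x ⊆ F (n + 1) := hF_succ n ▸ (subset_biUnion_of_mem hn).trans subset_union_right
  exact hR x (hTx.trans (subset_iUnion F (n + 1))) (hTR x)

theorem isClubIn_setOf_forall_mem (hreg : κ.IsRegular) (hunc : ℵ₀ < κ)
    (hT : ∀ x, ∃ T ⊆ H, #T < lift.{1} κ ∧ R x T) (hR : ∀ x, Monotone (R x)) :
    IsClubIn κ {M | M ⊆ H ∧ #M < lift.{1} κ}
      {M | (M ⊆ H ∧ #M < lift.{1} κ) ∧ ∀ x ∈ M, R x M} := by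
  refine ⟨fun M hM => hM.1, fun M hM => ?_, fun δ _ hδ f hf _ => ?_⟩
  · obtain ⟨N, hNH, hN, hMN, hNR⟩ := exists_superset_forall_mem hreg hunc hT hR hM.1 hM.2
    exact ⟨N, ⟨⟨hNH, hN⟩, hNR⟩, hMN⟩
  refine ⟨⟨iUnion₂_subset fun β hβ => (hf β hβ).1.1, ?_⟩, fun x hx => ?_⟩
  · refine (card_biUnion_lt_iff_forall_of_isRegular hreg.lift ?_).2 fun β hβ => (hf β hβ).1.2
    rwa [mk_Iio_ordinal, lift_lt]
  · obtain ⟨β, hβ, hxβ⟩ := mem_iUnion₂.1 hx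
    exact hR x (subset_biUnion_of_mem (u := f) hβ) ((hf β hβ).2 x hxβ)

end Closure

section Traces

variable {κ lam : Cardinal.{0}} {d : Set Ordinal → Set Ordinal}

def traces (κ lam : Cardinal.{0}) (d : Set Ordinal → Set Ordinal) (c : Set Ordinal.{0}) :
    Set (Set Ordinal.{0}) :=
  {x | ∃ a ∈ Pk κ lam, c ⊆ a ∧ x = d a ∩ c}

def CapturesTraces (κ lam : Cardinal.{0}) (d : Set Ordinal → Set Ordinal) (b : Set Ordinal.{0})
    (M : Set ZFSet.{0}) : Prop :=
  ∃ c ∈ Pk κ lam, (∀ α ∈ c, α.toZFSet ∈ M) ∧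
    ∀ a ∈ Pk κ lam, c ⊆ a → ∃ x ∈ M, CodesSet x (d a ∩ b)

theorem capturesTraces_monotone {b : Set Ordinal.{0}} : Monotone (CapturesTraces κ lam d b) := by
  rintro M N hMN ⟨c, hc, hcM, hcodes⟩
  exact ⟨c, hc, fun α hα => hMN (hcM α hα),
    fun a ha hca => (hcodes a ha hca).imp fun _ hx => ⟨hMN hx.1, hx.2⟩⟩

theorem mem_ordsOf_iff {M : Set ZFSet.{0}} {α : Ordinal.{0}} :
    α ∈ ordsOf lam M ↔ α < lam.ord ∧ α.toZFSet ∈ M := by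
  simp only [ordsOf, isOrdZF_iff_eq_toZFSet, exists_eq_right]
  rfl

theorem ordsOf_mem_Pk {M : Set ZFSet.{0}} (hM : #M < lift.{1} κ) : ordsOf lam M ∈ Pk κ lam := by
  refine ⟨fun α hα => (mem_ordsOf_iff.1 hα).1, lt_of_le_of_lt ?_ hM⟩
  refine mk_le_of_injective (f := fun α : ordsOf lam M => ⟨α.1.toZFSet, (mem_ordsOf_iff.1 α.2).2⟩)
    fun α β h => Subtype.ext (Ordinal.toZFSet_injective (congrArg Subtype.val h))

theorem CapturesTraces.exists_codesSet_inter {b : Set Ordinal.{0}} {M : Set ZFSet.{0}}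
    (h : CapturesTraces κ lam d b M) (hM : #M < lift.{1} κ) :
    ∃ x ∈ M, CodesSet x (d (ordsOf lam M) ∩ b) := by
  obtain ⟨c, hc, hcM, hcodes⟩ := h
  exact hcodes _ (ordsOf_mem_Pk hM) fun α hα => mem_ordsOf_iff.2 ⟨hc.1 α hα, hcM α hα⟩

theorem exists_capturesTraces {θ : Cardinal.{0}} (hκ : ℵ₀ ≤ κ) (hκθ : κ ≤ θ) (hlamθ : lam ≤ θ)
    {b c : Set Ordinal.{0}} (hb : b ∈ Pk κ lam) (hc : c ∈ Pk κ lam) (hbc : b ⊆ c)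
    (hcd : #(traces κ lam d c) < lift.{1} κ) :
    ∃ T ⊆ HSet θ, #T < lift.{1} κ ∧ CapturesTraces κ lam d b T := by
  have hcard : ∀ α < lam.ord, α.card < θ := fun α hα => (lt_ord.1 hα).trans_le hlamθ
  have hbo : ∀ e, e ∩ b ⊆ Iio lam.ord := fun e α hα => hb.1 α hα.2
  have hcode : ∀ e, codeSet lam.ord (e ∩ b) ∈ HSet θ ∧ CodesSet (codeSet lam.ord (e ∩ b)) (e ∩ b) :=
    fun e => ⟨codeSet_mem_HSet (hbo e)
      ((mk_le_mk_of_subset inter_subset_right).trans_lt (hb.2.trans_le (lift_le.2 hκθ)))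
      (fun α hα => hcard α (hbo e hα)), codesSet_codeSet (hbo e)⟩
  have hrestrict : ∀ a, d a ∩ c ∩ b = d a ∩ b := fun a => by rw [inter_assoc, inter_eq_right.2 hbc]
  refine ⟨Ordinal.toZFSet '' c ∪ (fun e => codeSet lam.ord (e ∩ b)) '' traces κ lam d c, ?_, ?_,
    c, hc, fun α hα => Or.inl ⟨α, hα, rfl⟩, fun a ha hca => ?_⟩
  · rintro _ (⟨α, hα, rfl⟩ | ⟨e, -, rfl⟩)
    exacts [toZFSet_mem_HSet (hcard α (hc.1 α hα)), (hcode e).1]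
  · exact (mk_union_le _ _).trans_lt (add_lt_of_lt (aleph0_le_lift.2 hκ)
      (mk_image_le.trans_lt hc.2) (mk_image_le.trans_lt hcd))
  · refine ⟨_, Or.inr ⟨d a ∩ c, ⟨a, ha, hca, rfl⟩, rfl⟩, ?_⟩
    simpa only [hrestrict] using (hcode (d a ∩ c)).2

theorem IsThin.exists_traces_lt (hthin : IsThin κ lam d) {b : Set Ordinal.{0}} (hb : b ∈ Pk κ lam) :
    ∃ c ∈ Pk κ lam, b ⊆ c ∧ #(traces κ lam d c) < lift.{1} κ := by
  obtain ⟨C₀, ⟨hC₀, hcof, -⟩, hsmall⟩ := hthin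
  obtain ⟨c, hc, hbc⟩ := hcof b hb
  exact ⟨c, hC₀ hc, hbc, hsmall c hc⟩

theorem mem_Pk_of_countable (hunc : ℵ₀ < κ) {b : Set Ordinal.{0}} (hb : b.Countable)
    (hblam : ∀ α ∈ b, α < lam.ord) : b ∈ Pk κ lam :=
  ⟨hblam, (le_aleph0_iff_set_countable.2 hb).trans_lt (by simpa using hunc)⟩

theorem IsThin.isSlender (hreg : κ.IsRegular) (hunc : ℵ₀ < κ) (hthin : IsThin κ lam d) :
    IsSlender κ lam d := by
  refine ⟨κ ⊔ lam, fun θ hθ _ => ?_⟩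
  have hT : ∀ x : ZFSet.{0}, ∃ T ⊆ HSet θ, #T < lift.{1} κ ∧
      ∀ b ∈ Pk κ lam, CodesSet x b → CapturesTraces κ lam d b T := by
    intro x
    by_cases hx : ∃ b ∈ Pk κ lam, CodesSet x b
    · obtain ⟨b, hb, hxb⟩ := hx
      obtain ⟨c, hc, hbc, hcd⟩ := hthin.exists_traces_lt hb
      obtain ⟨T, hTH, hT, hbT⟩ :=
        exists_capturesTraces hreg.aleph0_le (le_sup_left.trans hθ) (le_sup_right.trans hθ)
          hb hc hbc hcd
      exact ⟨T, hTH, hT, fun b' _ hxb' => hxb.unique hxb' ▸ hbT⟩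
    · refine ⟨∅, empty_subset _, ?_, fun b hb hxb => (hx ⟨b, hb, hxb⟩).elim⟩
      simpa using hreg.pos
  refine ⟨_, isClubIn_setOf_forall_mem hreg hunc hT
    (fun _ _ _ hMN hM b hb hxb => capturesTraces_monotone hMN (hM b hb hxb)), ?_⟩
  rintro M ⟨⟨-, hM⟩, hMR⟩ b hb hblam ⟨x, hx, hxb⟩
  exact (hMR x hx b (mem_Pk_of_countable hunc hb hblam) hxb).exists_codesSet_inter hM

theorem IIT_subset_IIS_general (κ lam : Cardinal.{0})
    (hreg : κ.IsRegular) (hunc : ℵ₀ < κ) :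
    IIT κ lam ⊆ IIS κ lam := by
  rintro A ⟨hA, d, hlist, hthin, heff⟩
  exact ⟨hA, d, hlist, hthin.isSlender hreg hunc, heff⟩

theorem IIT_subset_IIS (κ lam : Cardinal.{0})
    (hreg : κ.IsRegular) (hunc : ℵ₀ < κ) (hle : κ ≤ lam) :
    IIT κ lam ⊆ IIS κ lam :=
  IIT_subset_IIS_general κ lam hreg hunc
end Traces
end
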